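/- Let G be a group generated by a finite set X, and let H be a finitely generated subgroup of G whose normal closure N = ⟨H^G⟩ in G is not finitely generated. Then there is a constant C > 0 such that exp(m^(1/2)) ≤ C · γ_X(⌈Cm⌉) for all m ≥ 1. -/

import Mathlib

/-!
Write `H = ⟨S⟩` with `S` finite and let `K n` be the subgroup generated by the conjugates `g s g⁻¹`
with `s ∈ S` and `ℓ_X(g) ≤ n`. Each `K n` is finitely generated and `⋃ n, K n = ⟨H^G⟩`. If
`K (n + 1) = K n`, then `K n` is stable under conjugation by the generators, hence normal, hence
equal to `⟨H^G⟩`, which is not finitely generated. So every step adds a conjugate `cₙ ∉ K n` of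
length at most `2n + O(1)`, and the `2^t` products `c₀^ε₀ ⋯ c_{t-1}^ε_{t-1}` (`εᵢ ∈ {0, 1}`) are
pairwise distinct and of length `O(t²)`. Hence `γ_X(O(t²)) ≥ 2^t`, that is `γ_X(Cm) ≥ exp √m`.
-/

/-- The word length of `g` with respect to the generating set `X`: the least `n`
such that `g` is a product of `n` elements of `X ∪ X⁻¹` (with length `0` for `1`). -/
noncomputable def wordLength {G : Type*} [Group G] (X : Set G) (g : G) : ℕ :=
  sInf {n : ℕ | ∃ l : List G, l.length = n ∧ (∀ x ∈ l, x ∈ X ∨ x⁻¹ ∈ X) ∧ l.prod = g}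

/-- The growth function `γ_X(n) = |{g ∈ G : ℓ_X(g) ≤ n}|`. -/
noncomputable def growth {G : Type*} [Group G] (X : Set G) (n : ℕ) : ℕ :=
  Set.ncard {g : G | wordLength X g ≤ n}

section

variable {G : Type*} [Group G]

section WordLength

variable {X : Set G}

theorem wordLength_list_prod_le_length {l : List G} (hl : ∀ x ∈ l, x ∈ X ∨ x⁻¹ ∈ X) :
    wordLength X l.prod ≤ l.length :=
  Nat.sInf_le ⟨l, rfl, hl, rfl⟩

@[simp]
theorem wordLength_one : wordLength X (1 : G) = 0 :=
  Nat.le_zero.mp (wordLength_list_prod_le_length (l := []) (by simp))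

theorem wordLength_le_one {x : G} (hx : x ∈ X ∨ x⁻¹ ∈ X) : wordLength X x ≤ 1 := by
  simpa using wordLength_list_prod_le_length (X := X) (l := [x]) (by simpa using hx)

theorem exists_list_length_eq_wordLength (hX : Subgroup.closure X = ⊤) (g : G) :
    ∃ l : List G, l.length = wordLength X g ∧ (∀ x ∈ l, x ∈ X ∨ x⁻¹ ∈ X) ∧ l.prod = g := by
  have hg : g ∈ Submonoid.closure (X ∪ X⁻¹) := by
    rw [← Subgroup.closure_toSubmonoid, hX]
    exact Subgroup.mem_top g
  obtain ⟨l, hl, rfl⟩ := Submonoid.exists_list_of_mem_closure hg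
  exact Nat.sInf_mem (s := {n | ∃ l' : List G, l'.length = n ∧ (∀ x ∈ l', x ∈ X ∨ x⁻¹ ∈ X) ∧
    l'.prod = l.prod}) ⟨l.length, l, rfl, hl, rfl⟩

theorem wordLength_mul_le (hX : Subgroup.closure X = ⊤) (a b : G) :
    wordLength X (a * b) ≤ wordLength X a + wordLength X b := by
  obtain ⟨la, hla, hXa, rfl⟩ := exists_list_length_eq_wordLength hX a
  obtain ⟨lb, hlb, hXb, rfl⟩ := exists_list_length_eq_wordLength hX b
  rw [← hla, ← hlb, ← List.length_append, ← List.prod_append]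
  exact wordLength_list_prod_le_length fun x hx => (List.mem_append.mp hx).elim (hXa x) (hXb x)

theorem wordLength_inv_le (hX : Subgroup.closure X = ⊤) (g : G) :
    wordLength X g⁻¹ ≤ wordLength X g := by
  obtain ⟨l, hl, hXl, rfl⟩ := exists_list_length_eq_wordLength hX g
  rw [← hl, List.prod_inv_reverse, ← List.length_map (·⁻¹), ← List.length_reverse]
  refine wordLength_list_prod_le_length fun x hx => ?_
  obtain ⟨y, hy, rfl⟩ := List.mem_map.mp (List.mem_reverse.mp hx)
  simpa [or_comm] using hXl y hy

theorem wordLength_inv (hX : Subgroup.closure X = ⊤) (g : G) :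
    wordLength X g⁻¹ = wordLength X g :=
  le_antisymm (wordLength_inv_le hX g) (by simpa using wordLength_inv_le hX g⁻¹)

theorem wordLength_conj_le (hX : Subgroup.closure X = ⊤) (g s : G) :
    wordLength X (g * s * g⁻¹) ≤ 2 * wordLength X g + wordLength X s := by
  have h₁ := wordLength_mul_le hX (g * s) g⁻¹
  have h₂ := wordLength_mul_le hX g s
  rw [wordLength_inv hX] at h₁
  omega

theorem wordLength_list_prod_le (hX : Subgroup.closure X = ⊤) (l : List G) :
    wordLength X l.prod ≤ (l.map (wordLength X)).sum := by
  induction l with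
  | nil => simp
  | cons a l ih =>
    rw [List.prod_cons, List.map_cons, List.sum_cons]
    exact (wordLength_mul_le hX a l.prod).trans (Nat.add_le_add_left ih _)

theorem finite_setOf_wordLength_le (hXfin : X.Finite) (hX : Subgroup.closure X = ⊤) (n : ℕ) :
    {g : G | wordLength X g ≤ n}.Finite := by
  let Y := X ∪ X⁻¹
  have : Finite Y := (hXfin.union hXfin.inv).to_subtype
  refine ((List.finite_length_le Y n).image fun l => (l.map Subtype.val).prod).subset ?_
  intro g hg
  obtain ⟨l, hl, hXl, rfl⟩ := exists_list_length_eq_wordLength hX g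
  lift l to List Y using hXl
  exact ⟨l, (List.length_map Subtype.val ▸ hl ▸ hg : l.length ≤ n), rfl⟩

theorem growth_mono (hXfin : X.Finite) (hX : Subgroup.closure X = ⊤) : Monotone (growth X) :=
  fun _ n hmn => Set.ncard_le_ncard (fun _ hg => le_trans hg hmn)
    (finite_setOf_wordLength_le hXfin hX n)

end WordLength

section BoundedConjugates

variable (X S : Set G)

def boundedConjugates (n : ℕ) : Set G :=
  {c | ∃ g, wordLength X g ≤ n ∧ ∃ s ∈ S, c = g * s * g⁻¹}

def boundedNormalClosure (n : ℕ) : Subgroup G :=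
  Subgroup.closure (boundedConjugates X S n)

variable {X S}

theorem boundedNormalClosure_mono : Monotone (boundedNormalClosure X S) :=
  fun _ _ hmn => Subgroup.closure_mono fun _ ⟨g, hg, s, hs, hc⟩ => ⟨g, hg.trans hmn, s, hs, hc⟩

theorem subset_boundedNormalClosure (n : ℕ) : S ⊆ boundedNormalClosure X S n :=
  fun s hs => Subgroup.subset_closure ⟨1, by simp, s, hs, by group⟩

theorem boundedNormalClosure_le_normalClosure (n : ℕ) :
    boundedNormalClosure X S n ≤ Subgroup.normalClosure S := by
  rw [boundedNormalClosure, Subgroup.closure_le]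
  rintro _ ⟨g, -, s, hs, rfl⟩
  exact Subgroup.normalClosure_normal.conj_mem s (Subgroup.subset_normalClosure hs) g

theorem wordLength_le_of_mem_boundedConjugates (hX : Subgroup.closure X = ⊤) {D n : ℕ}
    (hD : ∀ s ∈ S, wordLength X s ≤ D) {c : G} (hc : c ∈ boundedConjugates X S n) :
    wordLength X c ≤ 2 * n + D := by
  obtain ⟨g, hg, s, hs, rfl⟩ := hc
  have := wordLength_conj_le hX g s
  have := hD s hs
  omega

theorem conj_mem_boundedNormalClosure (hX : Subgroup.closure X = ⊤) (g : G) {n : ℕ} {c : G}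
    (hc : c ∈ boundedNormalClosure X S n) :
    g * c * g⁻¹ ∈ boundedNormalClosure X S (wordLength X g + n) := by
  suffices h : (boundedNormalClosure X S n).map (MulAut.conj g).toMonoidHom ≤
      boundedNormalClosure X S (wordLength X g + n) from h ⟨c, hc, rfl⟩
  rw [boundedNormalClosure, MonoidHom.map_closure, Subgroup.closure_le]
  rintro _ ⟨_, ⟨g', hg', s, hs, rfl⟩, rfl⟩
  refine Subgroup.subset_closure ⟨g * g', ?_, s, hs, by simp [MulAut.conj_apply]; group⟩
  exact (wordLength_mul_le hX g g').trans (by gcongr)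

theorem boundedNormalClosure_normal_of_succ_le (hX : Subgroup.closure X = ⊤) {n : ℕ}
    (h : boundedNormalClosure X S (n + 1) ≤ boundedNormalClosure X S n) :
    (boundedNormalClosure X S n).Normal := by
  have conj_mem : ∀ x, x ∈ X ∨ x⁻¹ ∈ X → ∀ c ∈ boundedNormalClosure X S n,
      x * c * x⁻¹ ∈ boundedNormalClosure X S n := fun x hx c hc =>
    h (boundedNormalClosure_mono (by have := wordLength_le_one hx; omega)
      (conj_mem_boundedNormalClosure hX x hc))
  rw [← Subgroup.normalizer_eq_top_iff, eq_top_iff, ← hX, Subgroup.closure_le]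
  intro x hx
  refine Subgroup.mem_normalizer_iff.mpr fun c => ⟨conj_mem x (.inl hx) c, fun hc => ?_⟩
  simpa [mul_assoc] using conj_mem x⁻¹ (.inr (by simpa using hx)) _ hc

theorem boundedNormalClosure_fg (hXfin : X.Finite) (hX : Subgroup.closure X = ⊤)
    (hS : S.Finite) (n : ℕ) : (boundedNormalClosure X S n).FG := by
  refine (Subgroup.fg_iff _).mpr ⟨_, rfl, ?_⟩
  refine (((finite_setOf_wordLength_le hXfin hX n).prod hS).image
    fun p : G × G => p.1 * p.2 * p.1⁻¹).subset ?_
  rintro _ ⟨g, hg, s, hs, rfl⟩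
  exact ⟨(g, s), ⟨hg, hs⟩, rfl⟩

theorem exists_mem_boundedConjugates_succ_notMem (hXfin : X.Finite)
    (hX : Subgroup.closure X = ⊤) (hS : S.Finite) (hN : ¬ (Subgroup.normalClosure S).FG)
    (n : ℕ) : ∃ c ∈ boundedConjugates X S (n + 1), c ∉ boundedNormalClosure X S n := by
  by_contra! h
  have hle : boundedNormalClosure X S (n + 1) ≤ boundedNormalClosure X S n :=
    (Subgroup.closure_le _).mpr h
  have := boundedNormalClosure_normal_of_succ_le hX hle
  have heq : Subgroup.normalClosure S = boundedNormalClosure X S n :=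
    le_antisymm (Subgroup.normalClosure_le_normal (subset_boundedNormalClosure n))
      (boundedNormalClosure_le_normalClosure n)
  exact hN (heq ▸ boundedNormalClosure_fg hXfin hX hS n)

end BoundedConjugates

section SubsetProducts

def subsetProd (c : ℕ → G) (t : ℕ) (s : Finset ℕ) : G :=
  ((List.range t).map fun i => if i ∈ s then c i else 1).prod

theorem subsetProd_succ (c : ℕ → G) (t : ℕ) (s : Finset ℕ) :
    subsetProd c (t + 1) s = subsetProd c t s * if t ∈ s then c t else 1 := by
  simp [subsetProd, List.range_succ]

theorem mem_iff_of_mul_ite_eq_mul_ite {K : Subgroup G} {a b c : G} (ha : a ∈ K) (hb : b ∈ K)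
    (hc : c ∉ K) {p q : Prop} [Decidable p] [Decidable q]
    (h : (a * if p then c else 1) = b * if q then c else 1) : p ↔ q := by
  by_cases hp : p <;> by_cases hq : q <;> simp only [hp, hq, if_true, if_false, mul_one] at h ⊢
  · exact (hc (by simpa [← h] using K.mul_mem (K.inv_mem ha) hb)).elim
  · exact (hc (by simpa [h] using K.mul_mem (K.inv_mem hb) ha)).elim

variable {K : ℕ → Subgroup G} {c : ℕ → G}

theorem subsetProd_mem (hK : Monotone K) (hc : ∀ i, c i ∈ K (i + 1)) (t : ℕ) (s : Finset ℕ) :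
    subsetProd c t s ∈ K t := by
  induction t with
  | zero => simp [subsetProd]
  | succ t ih =>
    rw [subsetProd_succ]
    refine (K (t + 1)).mul_mem (hK t.le_succ ih) ?_
    split_ifs
    exacts [hc t, one_mem _]

theorem mem_iff_mem_of_subsetProd_eq (hK : Monotone K) (hc : ∀ i, c i ∈ K (i + 1))
    (hc' : ∀ i, c i ∉ K i) {t : ℕ} {s s' : Finset ℕ} (h : subsetProd c t s = subsetProd c t s')
    {i : ℕ} (hi : i < t) : i ∈ s ↔ i ∈ s' := by
  induction t with
  | zero => omega
  | succ t ih =>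
    rw [subsetProd_succ, subsetProd_succ] at h
    have ht := mem_iff_of_mul_ite_eq_mul_ite (subsetProd_mem hK hc t s)
      (subsetProd_mem hK hc t s') (hc' t) h
    simp only [ht] at h
    rcases (Nat.lt_succ_iff_lt_or_eq.mp hi) with hi | rfl
    exacts [ih (mul_right_cancel h) hi, ht]

theorem subsetProd_injOn (hK : Monotone K) (hc : ∀ i, c i ∈ K (i + 1)) (hc' : ∀ i, c i ∉ K i)
    (t : ℕ) : Set.InjOn (subsetProd c t) (Finset.range t).powerset := by
  intro s hs s' hs' h
  simp only [Finset.coe_powerset, Set.mem_preimage, Set.mem_powerset_iff,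
    Finset.coe_subset] at hs hs'
  ext i
  by_cases hi : i < t
  · exact mem_iff_mem_of_subsetProd_eq hK hc hc' h hi
  · exact iff_of_false (fun h => hi (Finset.mem_range.mp (hs h)))
      (fun h => hi (Finset.mem_range.mp (hs' h)))

theorem wordLength_subsetProd_le {X : Set G} (hX : Subgroup.closure X = ⊤) {L t : ℕ}
    (hL : ∀ i < t, wordLength X (c i) ≤ L) (s : Finset ℕ) :
    wordLength X (subsetProd c t s) ≤ t * L := by
  refine (wordLength_list_prod_le hX _).trans ?_
  refine (List.sum_le_card_nsmul _ L fun n hn => ?_).trans (by simp)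
  obtain ⟨_, hg, rfl⟩ := List.mem_map.mp hn
  obtain ⟨i, hi, rfl⟩ := List.mem_map.mp hg
  split_ifs
  exacts [hL i (List.mem_range.mp hi), by simp]

end SubsetProducts

theorem exists_two_pow_le_growth {X S : Set G} (hXfin : X.Finite) (hX : Subgroup.closure X = ⊤)
    (hS : S.Finite) (hN : ¬ (Subgroup.normalClosure S).FG) :
    ∃ D : ℕ, ∀ t : ℕ, 2 ^ t ≤ growth X (t * (2 * t + D)) := by
  obtain ⟨D, hD⟩ := (hS.image (wordLength X)).bddAbove
  choose c hc hc' using exists_mem_boundedConjugates_succ_notMem hXfin hX hS hN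
  refine ⟨D, fun t => ?_⟩
  have hlen : ∀ i < t, wordLength X (c i) ≤ 2 * t + D := fun i hi =>
    (wordLength_le_of_mem_boundedConjugates hX (fun s hs => hD ⟨s, hs, rfl⟩) (hc i)).trans
      (by omega)
  calc 2 ^ t = ((Finset.range t).powerset : Set (Finset ℕ)).ncard := by
        rw [Set.ncard_coe_finset, Finset.card_powerset, Finset.card_range]
    _ ≤ growth X (t * (2 * t + D)) :=
      Set.ncard_le_ncard_of_injOn _ (fun s _ => wordLength_subsetProd_le hX hlen s)
        (subsetProd_injOn boundedNormalClosure_mono (fun i => Subgroup.subset_closure (hc i))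
          hc' t) (finite_setOf_wordLength_le hXfin hX _)

end

theorem Real.exp_le_two_pow_ceil_two_mul (x : ℝ) : Real.exp x ≤ 2 ^ ⌈2 * x⌉₊ := by
  rw [← Real.rpow_natCast, Real.rpow_def_of_pos two_pos, Real.exp_le_exp]
  have hlog : 1 / 2 < Real.log 2 := by linarith [Real.log_two_gt_d9]
  have hceil : 2 * x ≤ ⌈2 * x⌉₊ := Nat.le_ceil _
  nlinarith [(Nat.cast_nonneg ⌈2 * x⌉₊ : (0 : ℝ) ≤ _)]

theorem exists_exp_sqrt_le_of_two_pow_le {f : ℕ → ℕ} (hf : Monotone f) {D : ℕ}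
    (h : ∀ t, 2 ^ t ≤ f (t * (2 * t + D))) :
    ∃ C : ℝ, 0 < C ∧ ∀ m : ℕ, 1 ≤ m → Real.exp (√m) ≤ C * f ⌈C * m⌉₊ := by
  refine ⟨3 * D + 18, by positivity, fun m hm => ?_⟩
  set t := ⌈2 * √(m : ℝ)⌉₊
  have hm : (1 : ℝ) ≤ m := by exact_mod_cast hm
  have hsqrt : 1 ≤ √(m : ℝ) := Real.one_le_sqrt.mpr hm
  have hsq : √(m : ℝ) * √(m : ℝ) = m := Real.mul_self_sqrt (by linarith)
  have ht : (t : ℝ) < 2 * √(m : ℝ) + 1 := Nat.ceil_lt_add_one (by positivity)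
  have hradius : t * (2 * t + D) ≤ ⌈(3 * D + 18 : ℝ) * m⌉₊ := by
    refine Nat.cast_le.mp (le_trans ?_ (Nat.le_ceil _))
    have ht' : (t : ℝ) ≤ 3 * √(m : ℝ) := by linarith
    have hsqrt_le : √(m : ℝ) ≤ m := by nlinarith
    push_cast
    calc (t : ℝ) * (2 * t + D) ≤ 3 * √(m : ℝ) * (2 * (3 * √(m : ℝ)) + D) := by gcongr
      _ = 18 * m + 3 * D * √(m : ℝ) := by linear_combination 18 * hsq
      _ ≤ (3 * D + 18) * m := by nlinarith [(Nat.cast_nonneg D : (0 : ℝ) ≤ _)]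
  calc Real.exp √(m : ℝ) ≤ 2 ^ t := Real.exp_le_two_pow_ceil_two_mul _
    _ ≤ f ⌈(3 * D + 18 : ℝ) * m⌉₊ := by exact_mod_cast (h t).trans (hf hradius)
    _ ≤ (3 * D + 18) * f ⌈(3 * D + 18 : ℝ) * m⌉₊ := by
      refine le_mul_of_one_le_left (Nat.cast_nonneg _) ?_
      linarith [(Nat.cast_nonneg D : (0 : ℝ) ≤ _)]

/-- Generalized Milnor lemma: if `G = ⟨X⟩` has a finitely generated subgroup `H` whose
normal closure is not finitely generated, then `γ_X(n) ≽ exp(n^(1/2))`. -/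
theorem generalized_milnor_lemma {G : Type*} [Group G] (X : Finset G)
    (hX : Subgroup.closure (X : Set G) = ⊤)
    (H : Subgroup G) (hH : H.FG)
    (hNfg : ¬ (Subgroup.normalClosure (H : Set G)).FG) :
    ∃ C : ℝ, 0 < C ∧ ∀ m : ℕ, 1 ≤ m →
      Real.exp ((m : ℝ) ^ ((1 : ℝ) / 2)) ≤ C * (growth (X : Set G) ⌈C * m⌉₊ : ℝ) := by
  obtain ⟨S, rfl⟩ := hH
  rw [Subgroup.normalClosure_closure_eq_normalClosure] at hNfg
  obtain ⟨D, hD⟩ := exists_two_pow_le_growth X.finite_toSet hX S.finite_toSet hNfg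
  simpa only [← Real.sqrt_eq_rpow] using
    exists_exp_sqrt_le_of_two_pow_le (growth_mono X.finite_toSet hX) hD
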